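/- arXiv:1002.0189 — 3 statements merged into one kernel-verified Lean document; each statement's English description precedes it below -/
import Mathlib

section
/- Let Γ be a countable group acting continuously and effectively on a compact metric space X, and suppose the action is equicontinuous (the family of maps {x ↦ γ • x : γ ∈ Γ} is equicontinuous) and minimal (every orbit is dense in X). Let p : Γ → [0,1] satisfy ∑_{γ ∈ Γ} p(γ) = 1 and suppose that supp(p) = {γ : p(γ) > 0} generates Γ as a semigroup. Then there is at most one p-harmonic Borel probability measure on X: any two p-harmonic Borel probability measures on X are equal. -/
open MeasureTheory
open scoped ENNReal NNReal

set_option linter.unusedSectionVars false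
namespace UHMaux

variable {X : Type*} [MetricSpace X] [CompactSpace X]
variable {Γ : Type*} [Group Γ] [MulAction Γ X]
variable (p : Γ → ℝ)

section

variable (hcont : ∀ γ : Γ, Continuous fun x : X => γ • x)
variable (hp0 : ∀ γ, 0 ≤ p γ) (hpsum : HasSum p 1)

include hp0 hpsum

theorem summable_term (f : C(X, ℝ)) (x : X) :
    Summable fun γ => p γ * f (γ • x) := by
  apply Summable.of_norm_bounded (hpsum.summable.mul_right _)
  intro γ
  rw [norm_mul, Real.norm_of_nonneg (hp0 γ)]
  exact mul_le_mul_of_nonneg_left (f.norm_coe_le_norm _) (hp0 γ)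

/-- The Markov operator. -/
noncomputable def P (f : C(X, ℝ)) : C(X, ℝ) :=
  ⟨fun x => ∑' γ, p γ * f (γ • x), by
    apply continuous_tsum
      (fun γ => continuous_const.mul (f.continuous.comp (hcont γ)))
      (hpsum.summable.mul_right ‖f‖)
    intro γ x
    show ‖p γ * f (γ • x)‖ ≤ _
    rw [norm_mul, Real.norm_of_nonneg (hp0 γ)]
    exact mul_le_mul_of_nonneg_left (f.norm_coe_le_norm _) (hp0 γ)⟩

theorem P_apply (f : C(X, ℝ)) (x : X) :
    P p hcont hp0 hpsum f x = ∑' γ, p γ * f (γ • x) := rfl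

theorem P_le (f : C(X, ℝ)) (b : ℝ) (hb : ∀ y, f y ≤ b) (x : X) :
    P p hcont hp0 hpsum f x ≤ b := by
  rw [P_apply]
  calc ∑' γ, p γ * f (γ • x) ≤ ∑' γ, p γ * b :=
        Summable.tsum_le_tsum (fun γ => mul_le_mul_of_nonneg_left (hb _) (hp0 γ))
          (summable_term p hp0 hpsum f x) (hpsum.summable.mul_right b)
    _ = b := by rw [tsum_mul_right, hpsum.tsum_eq, one_mul]

theorem le_P (f : C(X, ℝ)) (b : ℝ) (hb : ∀ y, b ≤ f y) (x : X) :
    b ≤ P p hcont hp0 hpsum f x := by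
  rw [P_apply]
  calc b = ∑' γ, p γ * b := by rw [tsum_mul_right, hpsum.tsum_eq, one_mul]
    _ ≤ ∑' γ, p γ * f (γ • x) :=
        Summable.tsum_le_tsum (fun γ => mul_le_mul_of_nonneg_left (hb _) (hp0 γ))
          (hpsum.summable.mul_right b) (summable_term p hp0 hpsum f x)

theorem P_sub (f g : C(X, ℝ)) (x : X) :
    P p hcont hp0 hpsum f x - P p hcont hp0 hpsum g x
      = ∑' γ, p γ * (f (γ • x) - g (γ • x)) := by
  rw [P_apply, P_apply, ← Summable.tsum_sub (summable_term p hp0 hpsum f x)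
    (summable_term p hp0 hpsum g x)]
  simp [mul_sub]

theorem norm_P_sub_le (f g : C(X, ℝ)) (x : X) :
    |P p hcont hp0 hpsum f x - P p hcont hp0 hpsum g x| ≤ ‖f - g‖ := by
  rw [P_sub]
  have hsum : Summable fun γ => p γ * (f (γ • x) - g (γ • x)) := by
    simpa [mul_sub] using (summable_term p hp0 hpsum f x).sub
      (summable_term p hp0 hpsum g x)
  have hnormsum : Summable fun γ => ‖p γ * (f (γ • x) - g (γ • x))‖ := by
    apply Summable.of_nonneg_of_le (fun γ => norm_nonneg _)
      (fun γ => ?_) (hpsum.summable.mul_right ‖f - g‖)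
    rw [norm_mul, Real.norm_of_nonneg (hp0 γ)]
    refine mul_le_mul_of_nonneg_left ?_ (hp0 γ)
    simpa using (f - g).norm_coe_le_norm (γ • x)
  calc |∑' γ, p γ * (f (γ • x) - g (γ • x))|
      ≤ ∑' γ, ‖p γ * (f (γ • x) - g (γ • x))‖ := norm_tsum_le_tsum_norm hnormsum
    _ ≤ ∑' γ, p γ * ‖f - g‖ := by
        refine Summable.tsum_le_tsum (fun γ => ?_) hnormsum (hpsum.summable.mul_right _)
        rw [norm_mul, Real.norm_of_nonneg (hp0 γ)]
        refine mul_le_mul_of_nonneg_left ?_ (hp0 γ)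
        simpa using (f - g).norm_coe_le_norm (γ • x)
    _ = ‖f - g‖ := by rw [tsum_mul_right, hpsum.tsum_eq, one_mul]

theorem abs_tsum_mul_le (g : Γ → ℝ) (C : ℝ) (hg : ∀ γ, |g γ| ≤ C) :
    |∑' γ, p γ * g γ| ≤ C := by
  have hC : 0 ≤ C := le_trans (abs_nonneg _) (hg 1)
  have hnormsum : Summable fun γ => ‖p γ * g γ‖ := by
    apply Summable.of_nonneg_of_le (fun γ => norm_nonneg _)
      (fun γ => ?_) (hpsum.summable.mul_right C)
    rw [norm_mul, Real.norm_of_nonneg (hp0 γ)]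
    exact mul_le_mul_of_nonneg_left (hg γ) (hp0 γ)
  calc |∑' γ, p γ * g γ| ≤ ∑' γ, ‖p γ * g γ‖ := norm_tsum_le_tsum_norm hnormsum
    _ ≤ ∑' γ, p γ * C := by
        refine Summable.tsum_le_tsum (fun γ => ?_) hnormsum (hpsum.summable.mul_right _)
        rw [norm_mul, Real.norm_of_nonneg (hp0 γ)]
        exact mul_le_mul_of_nonneg_left (hg γ) (hp0 γ)
    _ = C := by rw [tsum_mul_right, hpsum.tsum_eq, one_mul]

theorem norm_P_le (f : C(X, ℝ)) : ‖P p hcont hp0 hpsum f‖ ≤ ‖f‖ := by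
  rw [ContinuousMap.norm_le _ (norm_nonneg f)]
  intro x
  rw [Real.norm_eq_abs]
  exact abs_tsum_mul_le p hp0 hpsum _ _ (fun γ => f.norm_coe_le_norm (γ • x))

theorem P_add (f g : C(X, ℝ)) :
    P p hcont hp0 hpsum (f + g) = P p hcont hp0 hpsum f + P p hcont hp0 hpsum g := by
  ext x
  simp only [ContinuousMap.add_apply, P_apply, mul_add]
  exact Summable.tsum_add (summable_term p hp0 hpsum f x) (summable_term p hp0 hpsum g x)

theorem P_smul (c : ℝ) (f : C(X, ℝ)) :
    P p hcont hp0 hpsum (c • f) = c • P p hcont hp0 hpsum f := by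
  ext x
  simp only [ContinuousMap.smul_apply, P_apply, smul_eq_mul]
  rw [← tsum_mul_left]
  congr 1; ext γ; ring

theorem P_finsum {ι : Type*} (s : Finset ι) (F : ι → C(X, ℝ)) :
    P p hcont hp0 hpsum (∑ k ∈ s, F k) = ∑ k ∈ s, P p hcont hp0 hpsum (F k) := by
  classical
  induction s using Finset.induction with
  | empty =>
      simp only [Finset.sum_empty]
      ext x
      simp [P_apply]
  | insert _ _ hnot ih =>
      rw [Finset.sum_insert hnot, Finset.sum_insert hnot, P_add, ih]

theorem S_P (δ ε : ℝ) (f : C(X, ℝ))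
    (hf : ∀ (γ : Γ) (x x' : X), dist x x' < δ → |f (γ • x) - f (γ • x')| ≤ ε) :
    ∀ (γ : Γ) (x x' : X), dist x x' < δ →
      |P p hcont hp0 hpsum f (γ • x) - P p hcont hp0 hpsum f (γ • x')| ≤ ε := by
  intro γ x x' h
  have heq : P p hcont hp0 hpsum f (γ • x) - P p hcont hp0 hpsum f (γ • x')
      = ∑' β, p β * (f (β • γ • x) - f (β • γ • x')) := by
    rw [P_apply, P_apply, ← Summable.tsum_sub (summable_term p hp0 hpsum f (γ • x))
      (summable_term p hp0 hpsum f (γ • x'))]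
    simp [mul_sub]
  rw [heq]
  refine abs_tsum_mul_le p hp0 hpsum _ _ (fun β => ?_)
  rw [smul_smul, smul_smul]
  exact hf (β * γ) x x' h

theorem max_principle (f : C(X, ℝ)) (M : ℝ) (hM : ∀ y, f y ≤ M) (x : X)
    (hfx : P p hcont hp0 hpsum f x = M) (γ : Γ) (hγ : 0 < p γ) :
    f (γ • x) = M := by
  have hsub : Summable fun γ => p γ * (M - f (γ • x)) := by
    simpa [mul_sub] using (hpsum.summable.mul_right M).sub
      (summable_term p hp0 hpsum f x)
  have hzero : ∑' β, p β * (M - f (β • x)) = 0 := by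
    have : ∑' β, p β * (M - f (β • x))
        = (∑' β, p β * M) - ∑' β, p β * f (β • x) := by
      rw [← Summable.tsum_sub (hpsum.summable.mul_right M) (summable_term p hp0 hpsum f x)]
      simp [mul_sub]
    rw [this, tsum_mul_right, hpsum.tsum_eq, one_mul, ← P_apply p hcont hp0 hpsum, hfx,
      sub_self]
  have hnn : ∀ β, 0 ≤ p β * (M - f (β • x)) :=
    fun β => mul_nonneg (hp0 β) (sub_nonneg.mpr (hM _))
  have hle := Summable.le_tsum hsub γ (fun j _ => hnn j)
  rw [hzero] at hle
  have : p γ * (M - f (γ • x)) = 0 := le_antisymm hle (hnn γ)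
  have := (mul_eq_zero.mp this).resolve_left (ne_of_gt hγ)
  linarith

theorem norm_iter_le (f : C(X, ℝ)) (n : ℕ) :
    ‖(P p hcont hp0 hpsum)^[n] f‖ ≤ ‖f‖ := by
  induction n with
  | zero => simp
  | succ n ih =>
      rw [Function.iterate_succ_apply']
      exact le_trans (norm_P_le p hcont hp0 hpsum _) ih

theorem S_iter (δ ε : ℝ) (f : C(X, ℝ))
    (hf : ∀ (γ : Γ) (x x' : X), dist x x' < δ → |f (γ • x) - f (γ • x')| ≤ ε) (n : ℕ) :
    ∀ (γ : Γ) (x x' : X), dist x x' < δ →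
      |(P p hcont hp0 hpsum)^[n] f (γ • x) - (P p hcont hp0 hpsum)^[n] f (γ • x')| ≤ ε := by
  induction n with
  | zero => simpa using hf
  | succ n ih =>
      intro γ x x' h
      rw [Function.iterate_succ_apply']
      exact S_P p hcont hp0 hpsum δ ε _ ih γ x x' h

/-- Cesàro averages of the Markov operator. -/
noncomputable def A (n : ℕ) (f : C(X, ℝ)) : C(X, ℝ) :=
  ((n : ℝ))⁻¹ • ∑ k ∈ Finset.range n, (P p hcont hp0 hpsum)^[k] f

theorem A_apply (n : ℕ) (f : C(X, ℝ)) (x : X) :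
    A p hcont hp0 hpsum n f x
      = (n : ℝ)⁻¹ * ∑ k ∈ Finset.range n, (P p hcont hp0 hpsum)^[k] f x := by
  simp [A, ContinuousMap.coe_sum]

theorem S_A (δ ε : ℝ) (hε : 0 ≤ ε) (f : C(X, ℝ))
    (hf : ∀ (γ : Γ) (x x' : X), dist x x' < δ → |f (γ • x) - f (γ • x')| ≤ ε) (n : ℕ) :
    ∀ (γ : Γ) (x x' : X), dist x x' < δ →
      |A p hcont hp0 hpsum n f (γ • x) - A p hcont hp0 hpsum n f (γ • x')| ≤ ε := by
  intro γ x x' h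
  rw [A_apply, A_apply, ← mul_sub, ← Finset.sum_sub_distrib, abs_mul,
    abs_of_nonneg (by positivity : (0:ℝ) ≤ (n : ℝ)⁻¹)]
  calc (n : ℝ)⁻¹ * |∑ k ∈ Finset.range n,
        ((P p hcont hp0 hpsum)^[k] f (γ • x) - (P p hcont hp0 hpsum)^[k] f (γ • x'))|
      ≤ (n : ℝ)⁻¹ * ∑ k ∈ Finset.range n, ε := by
        refine mul_le_mul_of_nonneg_left ?_ (by positivity)
        refine le_trans (Finset.abs_sum_le_sum_abs _ _) (Finset.sum_le_sum fun k _ => ?_)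
        exact S_iter p hcont hp0 hpsum δ ε f hf k γ x x' h
    _ ≤ ε := by
        rcases Nat.eq_zero_or_pos n with hn | hn
        · simp [hn, hε]
        · rw [Finset.sum_const, Finset.card_range, nsmul_eq_mul, ← mul_assoc,
            inv_mul_cancel₀ (by positivity : (n:ℝ) ≠ 0), one_mul]

theorem norm_A_le (n : ℕ) (f : C(X, ℝ)) : ‖A p hcont hp0 hpsum n f‖ ≤ ‖f‖ := by
  rcases Nat.eq_zero_or_pos n with hn | hn
  · simp [A, hn, norm_nonneg]
  calc ‖A p hcont hp0 hpsum n f‖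
      ≤ (n : ℝ)⁻¹ * ∑ k ∈ Finset.range n, ‖(P p hcont hp0 hpsum)^[k] f‖ := by
        rw [A, norm_smul ((n:ℝ)⁻¹) (∑ k ∈ Finset.range n, (P p hcont hp0 hpsum)^[k] f), norm_inv, Real.norm_natCast]
        exact mul_le_mul_of_nonneg_left (norm_sum_le _ _) (by positivity)
    _ ≤ (n : ℝ)⁻¹ * ∑ k ∈ Finset.range n, ‖f‖ := by
        refine mul_le_mul_of_nonneg_left
          (Finset.sum_le_sum fun k _ => norm_iter_le p hcont hp0 hpsum f k) (by positivity)
    _ ≤ ‖f‖ := by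
        rw [Finset.sum_const, Finset.card_range, nsmul_eq_mul, ← mul_assoc,
          inv_mul_cancel₀ (by positivity : (n:ℝ) ≠ 0), one_mul]

theorem PA_sub (n : ℕ) (f : C(X, ℝ)) :
    P p hcont hp0 hpsum (A p hcont hp0 hpsum n f) - A p hcont hp0 hpsum n f
      = (n : ℝ)⁻¹ • ((P p hcont hp0 hpsum)^[n] f - f) := by
  rw [A, P_smul, P_finsum, ← smul_sub, ← Finset.sum_sub_distrib]
  congr 1
  have : ∀ k, P p hcont hp0 hpsum ((P p hcont hp0 hpsum)^[k] f)
      = (P p hcont hp0 hpsum)^[k + 1] f := fun k =>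
    (Function.iterate_succ_apply' (P p hcont hp0 hpsum) k f).symm
  calc ∑ k ∈ Finset.range n,
        (P p hcont hp0 hpsum ((P p hcont hp0 hpsum)^[k] f) - (P p hcont hp0 hpsum)^[k] f)
      = ∑ k ∈ Finset.range n,
        ((P p hcont hp0 hpsum)^[k + 1] f - (P p hcont hp0 hpsum)^[k] f) := by
        simp_rw [this]
    _ = (P p hcont hp0 hpsum)^[n] f - (P p hcont hp0 hpsum)^[0] f :=
        Finset.sum_range_sub (fun k => (P p hcont hp0 hpsum)^[k] f) n
    _ = (P p hcont hp0 hpsum)^[n] f - f := by simp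

theorem norm_PA_sub_le (n : ℕ) (f : C(X, ℝ)) :
    ‖P p hcont hp0 hpsum (A p hcont hp0 hpsum n f) - A p hcont hp0 hpsum n f‖
      ≤ (n : ℝ)⁻¹ * (2 * ‖f‖) := by
  rw [PA_sub, norm_smul ((n:ℝ)⁻¹) ((P p hcont hp0 hpsum)^[n] f - f), norm_inv, Real.norm_natCast]
  refine mul_le_mul_of_nonneg_left ?_ (by positivity)
  calc ‖(P p hcont hp0 hpsum)^[n] f - f‖ ≤ ‖(P p hcont hp0 hpsum)^[n] f‖ + ‖f‖ :=
        norm_sub_le _ _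
    _ ≤ 2 * ‖f‖ := by
        have := norm_iter_le p hcont hp0 hpsum f n
        linarith

section Integral

variable [MeasurableSpace X] [BorelSpace X] (μ : Measure X) [IsProbabilityMeasure μ]

theorem integrable_cm (g : C(X, ℝ)) : Integrable (fun x => g x) μ :=
  g.continuous.integrable_of_hasCompactSupport (HasCompactSupport.of_compactSpace _)

theorem integral_P (hμ : ∀ f : C(X, ℝ), ∫ x, f x ∂μ = ∫ x, (∑' γ : Γ, p γ * f (γ • x)) ∂μ)
    (g : C(X, ℝ)) : ∫ x, P p hcont hp0 hpsum g x ∂μ = ∫ x, g x ∂μ :=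
  (hμ g).symm

theorem integral_iter (hμ : ∀ f : C(X, ℝ), ∫ x, f x ∂μ = ∫ x, (∑' γ : Γ, p γ * f (γ • x)) ∂μ)
    (f : C(X, ℝ)) (k : ℕ) :
    ∫ x, (P p hcont hp0 hpsum)^[k] f x ∂μ = ∫ x, f x ∂μ := by
  induction k with
  | zero => simp
  | succ k ih =>
      simp only [Function.iterate_succ_apply']
      rw [integral_P p hcont hp0 hpsum μ hμ, ih]

theorem integral_A (hμ : ∀ f : C(X, ℝ), ∫ x, f x ∂μ = ∫ x, (∑' γ : Γ, p γ * f (γ • x)) ∂μ)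
    (f : C(X, ℝ)) (n : ℕ) (hn : 0 < n) :
    ∫ x, A p hcont hp0 hpsum n f x ∂μ = ∫ x, f x ∂μ := by
  have hA : ∀ x, A p hcont hp0 hpsum n f x
      = (n : ℝ)⁻¹ * ∑ k ∈ Finset.range n, (P p hcont hp0 hpsum)^[k] f x :=
    A_apply p hcont hp0 hpsum n f
  calc ∫ x, A p hcont hp0 hpsum n f x ∂μ
      = ∫ x, (n : ℝ)⁻¹ * ∑ k ∈ Finset.range n, (P p hcont hp0 hpsum)^[k] f x ∂μ := by
        simp_rw [hA]
    _ = (n : ℝ)⁻¹ * ∫ x, ∑ k ∈ Finset.range n, (P p hcont hp0 hpsum)^[k] f x ∂μ :=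
        integral_const_mul _ _
    _ = (n : ℝ)⁻¹ * ∑ k ∈ Finset.range n, ∫ x, (P p hcont hp0 hpsum)^[k] f x ∂μ := by
        rw [integral_finset_sum _
          (fun k _ => integrable_cm p hp0 hpsum μ ((P p hcont hp0 hpsum)^[k] f))]
    _ = (n : ℝ)⁻¹ * ∑ k ∈ Finset.range n, ∫ x, f x ∂μ := by
        simp_rw [integral_iter p hcont hp0 hpsum μ hμ f]
    _ = ∫ x, f x ∂μ := by
        rw [Finset.sum_const, Finset.card_range, nsmul_eq_mul, ← mul_assoc,
          inv_mul_cancel₀ (by positivity : (n:ℝ) ≠ 0), one_mul]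

end Integral

end
end UHMaux

set_option maxHeartbeats 1000000 in
open UHMaux BoundedContinuousFunction in
theorem unique_harmonic_measure
    {X : Type*} [MetricSpace X] [CompactSpace X] [MeasurableSpace X] [BorelSpace X]
    (Γ : Type*) [Group Γ] [Countable Γ] [MulAction Γ X]
    (hcont : ∀ γ : Γ, Continuous fun x : X => γ • x)
    (heff : ∀ γ : Γ, (∀ x : X, γ • x = x) → γ = 1)
    (hequi : ∀ ε > (0 : ℝ), ∃ δ > (0 : ℝ), ∀ γ : Γ, ∀ x x' : X,
      dist x x' < δ → dist (γ • x) (γ • x') ≤ ε)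
    (hmin : ∀ x : X, Dense (MulAction.orbit Γ x))
    (p : Γ → ℝ) (hp0 : ∀ γ, 0 ≤ p γ) (hp1 : ∀ γ, p γ ≤ 1) (hpsum : HasSum p 1)
    (hgen : Subsemigroup.closure {γ : Γ | 0 < p γ} = ⊤)
    (μ μ' : Measure X) [IsProbabilityMeasure μ] [IsProbabilityMeasure μ']
    (hμ : ∀ f : C(X, ℝ), ∫ x, f x ∂μ = ∫ x, (∑' γ : Γ, p γ * f (γ • x)) ∂μ)
    (hμ' : ∀ f : C(X, ℝ), ∫ x, f x ∂μ' = ∫ x, (∑' γ : Γ, p γ * f (γ • x)) ∂μ') :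
    μ = μ' := by
  rcases isEmpty_or_nonempty X with hemp | hne
  · exfalso
    have h1 : μ Set.univ = 1 := measure_univ
    rw [Set.univ_eq_empty_iff.mpr hemp] at h1
    simp at h1
  suffices key : ∀ f : C(X, ℝ), ∫ x, f x ∂μ = ∫ x, f x ∂μ' by
    apply ext_of_forall_lintegral_eq_of_IsFiniteMeasure
    intro f
    have hgc : Continuous fun x : X => ((f x : ℝ)) := NNReal.continuous_coe.comp f.continuous
    set g : C(X, ℝ) := ⟨fun x => (f x : ℝ), hgc⟩ with hg
    have hnn : ∀ x, (0:ℝ) ≤ g x := fun x => (f x).2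
    have hl : ∀ (ν : Measure X) [IsProbabilityMeasure ν],
        ∫⁻ x, (f x : ℝ≥0∞) ∂ν = ENNReal.ofReal (∫ x, g x ∂ν) := by
      intro ν _
      calc ∫⁻ x, ((f x : ℝ≥0) : ℝ≥0∞) ∂ν = ∫⁻ x, ENNReal.ofReal (g x) ∂ν := by
            congr 1
            ext x
            exact (ENNReal.ofReal_coe_nnreal (p := f x)).symm
        _ = ENNReal.ofReal (∫ x, g x ∂ν) :=
            (ofReal_integral_eq_lintegral_ofReal (integrable_cm p hp0 hpsum ν g)
              (Filter.Eventually.of_forall hnn)).symm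
    rw [hl μ, hl μ', key g]
  intro f
  -- a uniform modulus for f along the whole group action
  have hSf : ∀ ε > (0:ℝ), ∃ δ > (0:ℝ), ∀ (γ : Γ) (x x' : X), dist x x' < δ →
      |f (γ • x) - f (γ • x')| ≤ ε := by
    intro ε hε
    obtain ⟨δ₁, hδ₁, hu⟩ := Metric.uniformContinuous_iff.mp
      (CompactSpace.uniformContinuous_of_continuous f.continuous) ε hε
    obtain ⟨δ, hδ, hq⟩ := hequi (δ₁/2) (by positivity)
    refine ⟨δ, hδ, fun γ x x' h => ?_⟩
    have h2 := hu (lt_of_le_of_lt (hq γ x x' h) (by linarith))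
    rw [Real.dist_eq] at h2
    exact h2.le
  -- the Cesàro averages and their bounded-continuous incarnations
  set AC : ℕ → C(X, ℝ) := fun n => A p hcont hp0 hpsum (n + 1) f with hACdef
  set B : ℕ → (X →ᵇ ℝ) := fun n => mkOfCompact (AC n) with hBdef
  have hBapp : ∀ (n : ℕ) (x : X), B n x = AC n x := fun n x => rfl
  have hACnorm : ∀ n, ‖AC n‖ ≤ ‖f‖ := fun n => norm_A_le p hcont hp0 hpsum _ f
  have hSA : ∀ ε > (0:ℝ), ∃ δ > (0:ℝ), ∀ (n : ℕ) (x x' : X), dist x x' < δ →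
      |AC n x - AC n x'| ≤ ε := by
    intro ε hε
    obtain ⟨δ, hδ, hS⟩ := hSf ε hε
    refine ⟨δ, hδ, fun n x x' h => ?_⟩
    have h2 := S_A p hcont hp0 hpsum δ ε hε.le f hS (n+1) 1 x x' h
    simpa using h2
  -- Arzelà–Ascoli
  have hequiB : Equicontinuous ((↑) : ↥(Set.range B) → X → ℝ) := by
    intro x
    rw [Metric.equicontinuousAt_iff]
    intro ε hε
    obtain ⟨δ, hδ, hS⟩ := hSA (ε/2) (by positivity)
    refine ⟨δ, hδ, fun y hy i => ?_⟩
    obtain ⟨n, hn⟩ := i.2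
    have h2 : |AC n x - AC n y| ≤ ε/2 := by
      refine hS n x y ?_
      rwa [dist_comm] at hy
    have h3 : dist ((i : X →ᵇ ℝ) x) ((i : X →ᵇ ℝ) y) = |AC n x - AC n y| := by
      rw [← hn, Real.dist_eq]
      rfl
    rw [h3]
    linarith
  have hins : ∀ (h : X →ᵇ ℝ) (x : X), h ∈ Set.range B → h x ∈ Set.Icc (-‖f‖) ‖f‖ := by
    rintro - x ⟨n, rfl⟩
    have h1 : |AC n x| ≤ ‖f‖ := le_trans ((AC n).norm_coe_le_norm x) (hACnorm n)
    exact abs_le.mp h1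
  have hcompact : IsCompact (closure (Set.range B)) :=
    arzela_ascoli (Set.Icc (-‖f‖) ‖f‖) isCompact_Icc (Set.range B) hins hequiB
  have hmem : ∀ n, B n ∈ closure (Set.range B) := fun n => subset_closure ⟨n, rfl⟩
  obtain ⟨g, -, φ, hφ, hconv⟩ := hcompact.tendsto_subseq hmem
  set gC : C(X, ℝ) := g.toContinuousMap with hgCdef
  have hgCapp : ∀ x, gC x = g x := fun x => rfl
  have hdist0 : Filter.Tendsto (fun k => dist g (B (φ k))) Filter.atTop (nhds 0) := by
    have h1 := tendsto_iff_dist_tendsto_zero.mp hconv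
    simpa [Function.comp, dist_comm] using h1
  have hnormdiff : ∀ n, ‖gC - AC n‖ ≤ dist g (B n) := by
    intro n
    rw [ContinuousMap.norm_le _ dist_nonneg]
    intro x
    have h1 : (gC - AC n) x = g x - B n x := rfl
    rw [h1, Real.norm_eq_abs, ← Real.dist_eq]
    exact dist_coe_le_dist x
  -- the limiting function is P-invariant
  set u : ℕ → ℝ := fun k =>
    2 * dist g (B (φ k)) + (((φ k + 1 : ℕ)):ℝ)⁻¹ * (2 * ‖f‖) with hudef
  have hu0 : Filter.Tendsto u Filter.atTop (nhds 0) := by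
    have h1 : Filter.Tendsto (fun k => 2 * dist g (B (φ k))) Filter.atTop (nhds 0) := by
      simpa using hdist0.const_mul 2
    have h2a : Filter.Tendsto (fun k : ℕ => φ k + 1) Filter.atTop Filter.atTop :=
      Filter.tendsto_atTop_mono (fun k => le_trans hφ.le_apply (Nat.le_succ _))
        Filter.tendsto_id
    have h2b : Filter.Tendsto (fun k : ℕ => ((φ k + 1 : ℕ) : ℝ)) Filter.atTop Filter.atTop :=
      tendsto_natCast_atTop_atTop.comp h2a
    have h2 : Filter.Tendsto (fun k => ((((φ k + 1 : ℕ)):ℝ))⁻¹) Filter.atTop (nhds 0) :=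
      tendsto_inv_atTop_zero.comp h2b
    have h3 : Filter.Tendsto (fun k => ((((φ k + 1 : ℕ)):ℝ))⁻¹ * (2 * ‖f‖))
        Filter.atTop (nhds 0) := by
      simpa using h2.mul_const (2 * ‖f‖)
    rw [hudef]
    simpa only [add_zero] using h1.add h3
  have hPg : P p hcont hp0 hpsum gC = gC := by
    ext x
    have hb : ∀ k, |P p hcont hp0 hpsum gC x - gC x| ≤ u k := by
      intro k
      have t1 : |P p hcont hp0 hpsum gC x - P p hcont hp0 hpsum (AC (φ k)) x|
          ≤ ‖gC - AC (φ k)‖ := norm_P_sub_le p hcont hp0 hpsum gC (AC (φ k)) x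
      have t2 : |P p hcont hp0 hpsum (AC (φ k)) x - AC (φ k) x|
          ≤ (((φ k + 1 : ℕ)):ℝ)⁻¹ * (2 * ‖f‖) := by
        have h1 := norm_PA_sub_le p hcont hp0 hpsum (φ k + 1) f
        have h2 := (P p hcont hp0 hpsum (A p hcont hp0 hpsum (φ k + 1) f)
          - A p hcont hp0 hpsum (φ k + 1) f).norm_coe_le_norm x
        rw [ContinuousMap.sub_apply, Real.norm_eq_abs] at h2
        exact le_trans h2 (by exact_mod_cast h1)
      have t3 : |AC (φ k) x - gC x| ≤ ‖gC - AC (φ k)‖ := by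
        have h2 := (gC - AC (φ k)).norm_coe_le_norm x
        rw [ContinuousMap.sub_apply, Real.norm_eq_abs] at h2
        rw [abs_sub_comm]
        exact h2
      have hd := hnormdiff (φ k)
      calc |P p hcont hp0 hpsum gC x - gC x|
          ≤ |P p hcont hp0 hpsum gC x - AC (φ k) x| + |AC (φ k) x - gC x| :=
            abs_sub_le _ _ _
        _ ≤ (|P p hcont hp0 hpsum gC x - P p hcont hp0 hpsum (AC (φ k)) x|
            + |P p hcont hp0 hpsum (AC (φ k)) x - AC (φ k) x|) + |AC (φ k) x - gC x| :=
            add_le_add_left (abs_sub_le _ _ _) _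
        _ ≤ u k := by rw [hudef]; dsimp only; linarith
    have h1 : |P p hcont hp0 hpsum gC x - gC x| ≤ 0 :=
      ge_of_tendsto hu0 (Filter.Eventually.of_forall hb)
    have h2 := abs_nonneg (P p hcont hp0 hpsum gC x - gC x)
    have h3 : P p hcont hp0 hpsum gC x - gC x = 0 := abs_eq_zero.mp (le_antisymm h1 h2)
    linarith
  -- the limiting function is constant
  obtain ⟨x0, -, hx0⟩ := isCompact_univ.exists_isMaxOn Set.univ_nonempty
    gC.continuous.continuousOn
  set M := gC x0 with hMdef
  set K := {x : X | gC x = M} with hKdef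
  have hKclosed : IsClosed K := isClosed_eq gC.continuous continuous_const
  have hstep : ∀ γ : Γ, 0 < p γ → ∀ x ∈ K, γ • x ∈ K := by
    intro γ hγ x hx
    exact max_principle p hcont hp0 hpsum gC M (fun y => hx0 (Set.mem_univ y)) x
      (by rw [hPg]; exact hx) γ hγ
  have hall : ∀ γ : Γ, ∀ x ∈ K, γ • x ∈ K := by
    have hmemtop : ∀ γ : Γ, γ ∈ Subsemigroup.closure {γ : Γ | 0 < p γ} := by
      intro γ; rw [hgen]; trivial
    intro γ
    refine Subsemigroup.closure_induction (fun β hβ => hstep β hβ)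
      (fun a b _ _ ha hb x hx => ?_) (hmemtop γ)
    rw [mul_smul]
    exact ha _ (hb x hx)
  have hgconst : ∀ x, gC x = M := by
    have horb : MulAction.orbit Γ x0 ⊆ K := by
      rintro - ⟨γ, rfl⟩
      exact hall γ x0 rfl
    intro x
    have h1 : x ∈ closure (MulAction.orbit Γ x0) := by
      rw [(hmin x0).closure_eq]; trivial
    have h2 : x ∈ closure K := closure_mono horb h1
    rwa [hKclosed.closure_eq] at h2
  -- conclude: both integrals equal M
  have hint : ∀ (ν : Measure X) [IsProbabilityMeasure ν],
      (∀ h : C(X,ℝ), ∫ x, h x ∂ν = ∫ x, (∑' γ : Γ, p γ * h (γ • x)) ∂ν) →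
      ∫ x, f x ∂ν = M := by
    intro ν _ hν
    have hAint : ∀ k, ∫ x, AC (φ k) x ∂ν = ∫ x, f x ∂ν := fun k =>
      integral_A p hcont hp0 hpsum ν hν f (φ k + 1) (Nat.succ_pos _)
    have hgint : ∫ x, gC x ∂ν = M := by
      simp only [hgconst]
      simp
    have hdiff : ∀ k, |∫ x, f x ∂ν - M| ≤ dist g (B (φ k)) := by
      intro k
      rw [← hAint k, ← hgint,
        ← integral_sub (integrable_cm p hp0 hpsum ν (AC (φ k)))
          (integrable_cm p hp0 hpsum ν gC)]
      have h1 : ∀ x : X, ‖AC (φ k) x - gC x‖ ≤ dist g (B (φ k)) := by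
        intro x
        have h2 := (gC - AC (φ k)).norm_coe_le_norm x
        rw [ContinuousMap.sub_apply] at h2
        rw [Real.norm_eq_abs, abs_sub_comm, ← Real.norm_eq_abs]
        exact le_trans h2 (hnormdiff (φ k))
      have h3 := norm_integral_le_of_norm_le_const (μ := ν)
        (f := fun x => AC (φ k) x - gC x) (C := dist g (B (φ k)))
        (Filter.Eventually.of_forall h1)
      rw [Real.norm_eq_abs] at h3
      simpa using h3
    have h1 : |∫ x, f x ∂ν - M| ≤ 0 :=
      ge_of_tendsto hdist0 (Filter.Eventually.of_forall hdiff)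
    have h2 := abs_nonneg (∫ x, f x ∂ν - M)
    have h3 : ∫ x, f x ∂ν - M = 0 := abs_eq_zero.mp (le_antisymm h1 h2)
    linarith
  rw [hint μ hμ, hint μ' hμ']
end

section
/- Let Γ be a countable group acting continuously on a compact metric space X, and suppose the action is equicontinuous (the family of maps {x ↦ γ • x : γ ∈ Γ} is equicontinuous) and minimal (every orbit is dense in X). Let p : Γ → [0,1] satisfy ∑_{γ ∈ Γ} p(γ) = 1 and suppose that supp(p) = {γ : p(γ) > 0} generates Γ as a semigroup. Then every p-harmonic Borel probability measure μ on X is Γ-invariant: for every γ ∈ Γ and every continuous function f : X → ℝ, ∫_X f(γ • x) dμ(x) = ∫_X f(x) dμ(x). -/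
open MeasureTheory Filter Set Topology
open scoped BoundedContinuousFunction

/-!
For continuous `f`, the function `φ β = ∫ f (β • x) dμ` on `Γ` is bounded and harmonic for the
right random walk driven by `p`, so `p γ * (M - φ (β * γ)) ≤ M - φ β` with `M = sup φ`; since the
support of `p` generates `Γ` as a semigroup, this becomes a Harnack inequality
`q_w * (M - φ (β * w)) ≤ M - φ β` for every `w`. By equicontinuity and Arzelà–Ascoli the maps
`x ↦ β • x` form a totally bounded set in the uniform metric, and `φ (a * w)`, `φ (b * w)` are close
whenever `a`, `b` are uniformly close. An ultrafilter of near-maximisers of `φ` is then Cauchy: for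
`a` in one of its small sets and `w = a⁻¹ * β`, Harnack makes `φ (b * w)` nearly `M` for `b` further
along the ultrafilter, and `b * w` is close to `a * w = β`. So `φ` is constant and `φ γ = φ 1`.
-/

lemma mul_sub_le_sub_of_hasSum {ι : Type*} {p v : ι → ℝ} {M s : ℝ} (hp0 : ∀ i, 0 ≤ p i)
    (hp : HasSum p 1) (hv : ∀ i, v i ≤ M) (hs : HasSum (fun i => p i * v i) s) (i : ι) :
    p i * (M - v i) ≤ M - s := by
  have hsub : HasSum (fun i => p i * (M - v i)) (M - s) := by
    simpa [mul_sub] using (hp.mul_right M).sub hs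
  exact le_hasSum hsub i fun j _ => mul_nonneg (hp0 j) (sub_nonneg.2 (hv j))

lemma exists_pos_mul_le_of_mem_closure {Γ : Type*} [Semigroup Γ] {c d : Γ → ℝ}
    (h : ∀ β γ, c γ * d (β * γ) ≤ d β) {w : Γ} (hw : w ∈ Subsemigroup.closure {γ | 0 < c γ}) :
    ∃ q > 0, ∀ β, q * d (β * w) ≤ d β := by
  induction hw using Subsemigroup.closure_induction with
  | mem γ hγ => exact ⟨c γ, hγ, fun β => h β γ⟩
  | mul x y _ _ ihx ihy =>
    obtain ⟨qx, hqx, hx⟩ := ihx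
    obtain ⟨qy, hqy, hy⟩ := ihy
    refine ⟨qx * qy, mul_pos hqx hqy, fun β => ?_⟩
    calc qx * qy * d (β * (x * y)) = qx * (qy * d (β * x * y)) := by rw [mul_assoc β]; ring
      _ ≤ qx * d (β * x) := mul_le_mul_of_nonneg_left (hy _) hqx.le
      _ ≤ d β := hx β

theorem eq_iSup_of_harnack_of_totallyBounded {Γ Y : Type*} [Group Γ] [PseudoMetricSpace Y]
    {T : Γ → Y} (hT : TotallyBounded (range T)) {φ : Γ → ℝ} (hφ : BddAbove (range φ))
    (harnack : ∀ w, ∃ q > 0, ∀ β, q * ((⨆ i, φ i) - φ (β * w)) ≤ (⨆ i, φ i) - φ β)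
    (hunif : ∀ ε > 0, ∃ δ > 0, ∀ a b w, dist (T a) (T b) < δ → |φ (a * w) - φ (b * w)| ≤ ε)
    (β : Γ) : φ β = ⨆ i, φ i := by
  set M := ⨆ i, φ i
  have hM : M ∈ closure (range φ) := csSup_mem_closure (range_nonempty φ) hφ
  have hne : (comap φ (𝓝 M)).NeBot := comap_neBot_iff.2 fun t ht => by
    obtain ⟨_, hy, β, rfl⟩ := mem_closure_iff_nhds.1 hM t ht
    exact ⟨β, hy⟩
  set 𝒰 := Ultrafilter.of (comap φ (𝓝 M))
  have h𝒰 : Tendsto φ 𝒰 (𝓝 M) := tendsto_comap.mono_left (Ultrafilter.of_le _)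
  refine le_antisymm (le_ciSup hφ β) (le_of_forall_pos_lt_add fun ε hε => ?_)
  obtain ⟨δ, hδ, hδε⟩ := hunif (ε / 2) (half_pos hε)
  have hcauchy : Cauchy (map T 𝒰) :=
    totallyBounded_iff_ultrafilter.1 hT (𝒰.map T) (by simp)
  obtain ⟨t, ht, htδ⟩ := (Metric.cauchy_iff.1 hcauchy).2 δ hδ
  have ht' : ∀ᶠ b in 𝒰, T b ∈ t := ht
  obtain ⟨a, ha⟩ := ht'.exists
  obtain ⟨q, hq, hqw⟩ := harnack (a⁻¹ * β)
  have hnear : ∀ᶠ b in 𝒰, M - q * (ε / 2) < φ b :=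
    (tendsto_order.1 h𝒰).1 _ (by linarith [mul_pos hq (half_pos hε)])
  obtain ⟨b, hbt, hb⟩ := (ht'.and hnear).exists
  have hbw_near : M - φ (b * (a⁻¹ * β)) < ε / 2 := by
    have := hqw b
    nlinarith
  have hbw_close := hδε a b (a⁻¹ * β) (htδ _ ha _ hbt)
  rw [mul_inv_cancel_left] at hbw_close
  linarith [(abs_le.1 hbw_close).1]

section Action

variable {X Γ : Type*} [MetricSpace X] [CompactSpace X] [Group Γ] [MulAction Γ X]
  [ContinuousConstSMul Γ X]

variable (X) in
def smulBCF (γ : Γ) : X →ᵇ X :=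
  .mkOfCompact ⟨(γ • ·), continuous_const_smul γ⟩

@[simp]
lemma smulBCF_apply (γ : Γ) (x : X) : smulBCF X γ x = γ • x := rfl

lemma totallyBounded_range_smulBCF (h : Equicontinuous fun (γ : Γ) (x : X) => γ • x) :
    TotallyBounded (range (smulBCF X (Γ := Γ))) := by
  have hA : Equicontinuous fun g : range (smulBCF X (Γ := Γ)) => ⇑(g : X →ᵇ X) := by
    convert h.comp (rangeSplitting (smulBCF X)) with g
    exact congrArg DFunLike.coe (apply_rangeSplitting (smulBCF X) g).symm
  exact (BoundedContinuousFunction.arzela_ascoli univ isCompact_univ _ (fun _ _ _ => mem_univ _)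
    hA).totallyBounded.subset subset_closure

variable [MeasurableSpace X] [BorelSpace X] (μ : Measure X)

lemma hasSum_integral_comp_smul [Countable Γ] [IsFiniteMeasure μ] {p : Γ → ℝ}
    (hp0 : ∀ γ, 0 ≤ p γ) (hp : Summable p) (f : C(X, ℝ)) :
    HasSum (fun γ => p γ * ∫ x, f (γ • x) ∂μ) (∫ x, ∑' γ, p γ * f (γ • x) ∂μ) := by
  have hint : ∀ γ : Γ, Integrable (fun x => p γ * f (γ • x)) μ := fun γ =>
    (by fun_prop : Continuous fun x => p γ * f (γ • x)).integrable_of_hasCompactSupport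
      (.of_compactSpace _)
  have hsum : Summable fun γ => ∫ x, ‖p γ * f (γ • x)‖ ∂μ := by
    refine .of_nonneg_of_le (fun γ => integral_nonneg fun x => norm_nonneg _) (fun γ => ?_)
      (hp.mul_right (‖f‖ * μ.real univ))
    calc ∫ x, ‖p γ * f (γ • x)‖ ∂μ ≤ ∫ _, p γ * ‖f‖ ∂μ :=
          integral_mono (hint γ).norm (integrable_const _) fun x => by
            rw [norm_mul, Real.norm_of_nonneg (hp0 γ)]
            exact mul_le_mul_of_nonneg_left (f.norm_coe_le_norm _) (hp0 γ)
      _ = p γ * (‖f‖ * μ.real univ) := by rw [integral_const, smul_eq_mul]; ring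
  simpa only [integral_const_mul] using hasSum_integral_of_summable_integral_norm hint hsum

lemma exists_abs_integral_comp_sub_le [IsProbabilityMeasure μ] (f : C(X, ℝ)) {ε : ℝ}
    (hε : 0 < ε) : ∃ δ > 0, ∀ g h : X → X, Continuous g → Continuous h →
      (∀ x, dist (g x) (h x) < δ) → |∫ x, f (g x) ∂μ - ∫ x, f (h x) ∂μ| ≤ ε := by
  obtain ⟨δ, hδ, hf⟩ := Metric.uniformContinuous_iff.1
    (CompactSpace.uniformContinuous_of_continuous f.continuous) ε hε
  refine ⟨δ, hδ, fun g h hg hh hgh => ?_⟩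
  have hint : ∀ g : X → X, Continuous g → Integrable (fun x => f (g x)) μ := fun g hg =>
    (f.continuous.comp hg).integrable_of_hasCompactSupport (.of_compactSpace _)
  rw [← integral_sub (hint g hg) (hint h hh), ← Real.norm_eq_abs]
  simpa using norm_integral_le_of_norm_le_const (μ := μ) (f := fun x => f (g x) - f (h x))
    (.of_forall fun x => by rw [← dist_eq_norm]; exact (hf (hgh x)).le)

lemma exists_abs_integral_comp_mul_smul_sub_le [IsProbabilityMeasure μ] (f : C(X, ℝ)) {ε : ℝ}
    (hε : 0 < ε) : ∃ δ > 0, ∀ a b w : Γ, dist (smulBCF X a) (smulBCF X b) < δ →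
      |∫ x, f ((a * w) • x) ∂μ - ∫ x, f ((b * w) • x) ∂μ| ≤ ε := by
  obtain ⟨δ, hδ, h⟩ := exists_abs_integral_comp_sub_le μ f hε
  refine ⟨δ, hδ, fun a b w hab => ?_⟩
  simpa only [smulBCF_apply, mul_smul] using h _ _ (by fun_prop) (by fun_prop)
    fun x => (BoundedContinuousFunction.dist_coe_le_dist (w • x)).trans_lt hab

end Action

theorem harmonic_measure_is_invariant_general
    {X : Type*} [MetricSpace X] [CompactSpace X] [MeasurableSpace X] [BorelSpace X]
    (Γ : Type*) [Group Γ] [Countable Γ] [MulAction Γ X]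
    (hcont : ∀ γ : Γ, Continuous fun x : X => γ • x)
    (hequi : ∀ ε > (0 : ℝ), ∃ δ > (0 : ℝ), ∀ γ : Γ, ∀ x x' : X,
      dist x x' < δ → dist (γ • x) (γ • x') ≤ ε)
    (p : Γ → ℝ) (hp0 : ∀ γ, 0 ≤ p γ) (hpsum : HasSum p 1)
    (hgen : Subsemigroup.closure {γ : Γ | 0 < p γ} = ⊤)
    (μ : Measure X) [IsProbabilityMeasure μ]
    (hμ : ∀ f : C(X, ℝ), ∫ x, f x ∂μ = ∫ x, (∑' γ : Γ, p γ * f (γ • x)) ∂μ) :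
    ∀ γ : Γ, ∀ f : C(X, ℝ), ∫ x, f (γ • x) ∂μ = ∫ x, f x ∂μ := by
  have : ContinuousConstSMul Γ X := ⟨hcont⟩
  intro γ f
  set φ : Γ → ℝ := fun β => ∫ x, f (β • x) ∂μ
  have hφ_harmonic (β : Γ) : HasSum (fun γ => p γ * φ (β * γ)) (φ β) := by
    have h := hasSum_integral_comp_smul μ hp0 hpsum.summable (f.comp ⟨(β • ·), hcont β⟩)
    rw [← hμ] at h
    simpa [φ, mul_smul] using h
  have hφ_bdd : BddAbove (range φ) := ⟨‖f‖, forall_mem_range.2 fun β => (le_abs_self _).trans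
    ((norm_integral_le_of_norm_le_const (.of_forall fun x => f.norm_coe_le_norm _)).trans_eq
      (by simp))⟩
  have hharnack (w : Γ) : ∃ q > 0, ∀ β, q * ((⨆ i, φ i) - φ (β * w)) ≤ (⨆ i, φ i) - φ β :=
    exists_pos_mul_le_of_mem_closure (d := fun β => (⨆ i, φ i) - φ β)
      (fun β => mul_sub_le_sub_of_hasSum hp0 hpsum (fun _ => le_ciSup hφ_bdd _) (hφ_harmonic β))
      (hgen ▸ Subsemigroup.mem_top w)
  have hequi' : Equicontinuous fun (γ : Γ) (x : X) => γ • x :=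
    UniformEquicontinuous.equicontinuous <| Metric.uniformEquicontinuous_iff.2 fun ε hε =>
      (hequi (ε / 2) (half_pos hε)).imp fun δ ⟨hδ, h⟩ =>
        ⟨hδ, fun x y hxy γ => (h γ x y hxy).trans_lt (half_lt_self hε)⟩
  have hφ_const := eq_iSup_of_harnack_of_totallyBounded (totallyBounded_range_smulBCF hequi')
    hφ_bdd hharnack fun _ => exists_abs_integral_comp_mul_smul_sub_le μ f
  calc φ γ = φ 1 := (hφ_const γ).trans (hφ_const 1).symm
    _ = ∫ x, f x ∂μ := by simp [φ]

theorem harmonic_measure_is_invariant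
    {X : Type*} [MetricSpace X] [CompactSpace X] [MeasurableSpace X] [BorelSpace X]
    (Γ : Type*) [Group Γ] [Countable Γ] [MulAction Γ X]
    (hcont : ∀ γ : Γ, Continuous fun x : X => γ • x)
    (hequi : ∀ ε > (0 : ℝ), ∃ δ > (0 : ℝ), ∀ γ : Γ, ∀ x x' : X,
      dist x x' < δ → dist (γ • x) (γ • x') ≤ ε)
    (hmin : ∀ x : X, Dense (MulAction.orbit Γ x))
    (p : Γ → ℝ) (hp0 : ∀ γ, 0 ≤ p γ) (hp1 : ∀ γ, p γ ≤ 1) (hpsum : HasSum p 1)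
    (hgen : Subsemigroup.closure {γ : Γ | 0 < p γ} = ⊤)
    (μ : Measure X) [IsProbabilityMeasure μ]
    (hμ : ∀ f : C(X, ℝ), ∫ x, f x ∂μ = ∫ x, (∑' γ : Γ, p γ * f (γ • x)) ∂μ) :
    ∀ γ : Γ, ∀ f : C(X, ℝ), ∫ x, f (γ • x) ∂μ = ∫ x, f x ∂μ :=
  harmonic_measure_is_invariant_general Γ hcont hequi p hp0 hpsum hgen μ hμ
end

section
/- Let X be a compact metric space and let Γ be a group of homeomorphisms of X such that the family Γ (together with all inverses, which belong to Γ since Γ is a group) is equicontinuous. Let G be the closure of Γ inside the space C(X, X) of continuous self-maps of X with the supremum metric. Then every g ∈ G is a homeomorphism of X onto X, and moreover its inverse g⁻¹ also belongs to G. -/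
/-!
If `γₙ → g` with `γₙ ∈ Γ`, the inverses `γₙ⁻¹` form a uniformly Cauchy sequence: a bound on
`d(γₘ z, γₙ z)` at `z = γₙ⁻¹ y`, pushed through the equicontinuous map `γₘ⁻¹`, bounds
`d(γₘ⁻¹ y, γₙ⁻¹ y)`. Their limit `f` lies in `G`, and since composition is jointly continuous
on `C(X, X)`, the identities `γₙ ∘ γₙ⁻¹ = id = γₙ⁻¹ ∘ γₙ` pass to the limit, so `g` is a
homeomorphism with inverse `f`.
-/

open Filter Topology

namespace Homeomorph

variable {X : Type*}

theorem dist_symm_lt_of_dist_lt [MetricSpace X] [CompactSpace X]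
    {a b : X ≃ₜ X} {δ ε : ℝ} (hε : 0 < ε)
    (ha : ∀ x x', dist x x' < δ → dist (a.symm x) (a.symm x') < ε)
    (hab : dist (a : C(X, X)) b < δ) :
    dist (a.symm : C(X, X)) b.symm < ε := by
  refine (ContinuousMap.dist_lt_iff hε).2 fun y => ?_
  have hy : dist (a (b.symm y)) y < δ := by
    simpa using (ContinuousMap.dist_apply_le_dist (f := (a : C(X, X))) (b.symm y)).trans_lt hab
  simpa [dist_comm] using ha _ _ hy

theorem cauchySeq_symm [MetricSpace X] [CompactSpace X]
    {γ : ℕ → X ≃ₜ X} (hequi : UniformEquicontinuous fun n => ⇑(γ n).symm)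
    (hγ : CauchySeq fun n => (γ n : C(X, X))) :
    CauchySeq fun n => ((γ n).symm : C(X, X)) := by
  rw [Metric.cauchySeq_iff] at hγ ⊢
  intro ε hε
  obtain ⟨δ, hδ, hequiδ⟩ := Metric.uniformEquicontinuous_iff.1 hequi ε hε
  obtain ⟨N, hN⟩ := hγ δ hδ
  exact ⟨N, fun m hm n hn =>
    dist_symm_lt_of_dist_lt hε (fun x x' h => hequiδ x x' h m) (hN m hm n hn)⟩

theorem exists_eq_of_tendsto_of_tendsto_symm [TopologicalSpace X] [T2Space X]
    [LocallyCompactSpace X] {ι : Type*} {l : Filter ι} [l.NeBot] {γ : ι → X ≃ₜ X}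
    {g f : C(X, X)} (hg : Tendsto (fun i => (γ i : C(X, X))) l (𝓝 g))
    (hf : Tendsto (fun i => ((γ i).symm : C(X, X))) l (𝓝 f)) :
    ∃ h : X ≃ₜ X, ⇑h = g ∧ ⇑h.symm = f := by
  have comp_eq_id : ∀ {u v : ι → C(X, X)} {p q : C(X, X)}, Tendsto u l (𝓝 p) →
      Tendsto v l (𝓝 q) → (∀ i, (u i).comp (v i) = .id X) → p.comp q = .id X :=
    fun hu hv huv => tendsto_nhds_unique
      ((ContinuousMap.continuous_comp'.tendsto _).comp (hv.prodMk_nhds hu))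
      (by simp only [Function.comp_def, huv]; exact tendsto_const_nhds)
  have hgf := comp_eq_id hg hf fun i => by ext; simp
  have hfg := comp_eq_id hf hg fun i => by ext; simp
  exact ⟨⟨⟨g, f, fun x => congr($hfg x), fun x => congr($hgf x)⟩, g.continuous, f.continuous⟩,
    rfl, rfl⟩

end Homeomorph

theorem closure_of_equicontinuous_homeo_group_consists_of_homeos_general
    {X : Type*} [MetricSpace X] [CompactSpace X]
    (Γ : Set (X ≃ₜ X))
    (hsymm : ∀ γ ∈ Γ, γ.symm ∈ Γ)
    (hequi : ∀ ε > (0 : ℝ), ∃ δ > (0 : ℝ), ∀ γ ∈ Γ, ∀ x x' : X,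
      dist x x' < δ → dist (γ x) (γ x') ≤ ε)
    (G : Set C(X, X)) (hG : G = closure {f : C(X, X) | ∃ γ ∈ Γ, ⇑f = ⇑γ}) :
    ∀ g ∈ G, ∃ h : X ≃ₜ X, ⇑h = ⇑g ∧ ∃ f : C(X, X), ⇑f = ⇑h.symm ∧ f ∈ G := by
  subst hG
  intro g hg
  obtain ⟨u, hu, hug⟩ := mem_closure_iff_seq_limit.mp hg
  choose γ hγΓ hγ using hu
  obtain rfl : u = fun n => (γ n : C(X, X)) := funext fun n => DFunLike.coe_injective (hγ n)
  have hequi_symm : UniformEquicontinuous fun n => ⇑(γ n).symm := by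
    refine Metric.uniformEquicontinuous_iff.2 fun ε hε => ?_
    obtain ⟨δ, hδ, hδε⟩ := hequi (ε / 2) (half_pos hε)
    exact ⟨δ, hδ, fun x x' hxx' n =>
      (hδε _ (hsymm _ (hγΓ n)) x x' hxx').trans_lt (half_lt_self hε)⟩
  obtain ⟨f, hf⟩ := cauchySeq_tendsto_of_complete
    (Homeomorph.cauchySeq_symm hequi_symm hug.cauchySeq)
  obtain ⟨h, hgh, hfh⟩ := Homeomorph.exists_eq_of_tendsto_of_tendsto_symm hug hf
  exact ⟨h, hgh, f, hfh.symm, mem_closure_of_tendsto hf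
    (Eventually.of_forall fun n => ⟨(γ n).symm, hsymm _ (hγΓ n), rfl⟩)⟩

theorem closure_of_equicontinuous_homeo_group_consists_of_homeos
    {X : Type*} [MetricSpace X] [CompactSpace X]
    (Γ : Set (X ≃ₜ X))
    (hrefl : Homeomorph.refl X ∈ Γ)
    (htrans : ∀ γ ∈ Γ, ∀ γ' ∈ Γ, γ.trans γ' ∈ Γ)
    (hsymm : ∀ γ ∈ Γ, γ.symm ∈ Γ)
    (hequi : ∀ ε > (0 : ℝ), ∃ δ > (0 : ℝ), ∀ γ ∈ Γ, ∀ x x' : X,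
      dist x x' < δ → dist (γ x) (γ x') ≤ ε)
    (G : Set C(X, X)) (hG : G = closure {f : C(X, X) | ∃ γ ∈ Γ, ⇑f = ⇑γ}) :
    ∀ g ∈ G, ∃ h : X ≃ₜ X, ⇑h = ⇑g ∧ ∃ f : C(X, X), ⇑f = ⇑h.symm ∧ f ∈ G :=
  closure_of_equicontinuous_homeo_group_consists_of_homeos_general Γ hsymm hequi G hG
end
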